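/- The function f̃₁⁽⁰⁾(v) = C·v^{−2(1+γ/2)}·exp(−(M̄/ρ̄)·γ/v) on (0,∞), with γ = B/D, B = 2ω₁ + ω₂(1+α), D = ζ²(3+α)/2, is a stationary solution of the Fokker–Planck equation ∂_τ f = −(β₁²/(1+α)) ∂_v[((ω₁M̄ − ω₂vρ̄) + α(ω₂M̄ − ω₂vρ̄) + (ω₁M̄ − ω₁vρ̄) + (ω₂M̄ − ω₁vρ̄)) f] + (ζ²β₁²ρ̄(3+α)/(2(1+α))) ∂²_{vv}(v² f), i.e. the right-hand side vanishes identically on (0,∞) when f = f̃₁⁽⁰⁾. -/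

import Mathlib

/-!
The equation is in divergence form, and `f̃₁⁽⁰⁾` has zero flux: writing `D = ζ²(3+α)/2`, one has
`(v² f)' = γ (M̄/ρ̄ - v) f`, so `ρ̄ D (v² f)' = B (M̄ - ρ̄ v) f`, i.e. the diffusive flux balances the
drift exactly. Hence the drift term is a constant multiple of `(v² f)'` near every `v > 0`, and the
two terms of the right-hand side cancel.
-/

open Real Filter Topology

lemma hasDerivAt_rpow_mul_exp_neg_div (a c : ℝ) {u : ℝ} (hu : 0 < u) :
    HasDerivAt (fun x => x ^ a * exp (-c / x))
      ((a * u + c) / u ^ 2 * (u ^ a * exp (-c / u))) u := by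
  have hpow : HasDerivAt (fun x : ℝ => x ^ a) (a * u ^ (a - 1)) u :=
    hasDerivAt_rpow_const (Or.inl hu.ne')
  have hexp : HasDerivAt (fun x : ℝ => -c / x) (c / u ^ 2) u := by
    simpa [div_eq_mul_inv, neg_mul, mul_neg] using (hasDerivAt_inv hu.ne').const_mul (-c)
  refine (hpow.mul hexp.exp).congr_deriv ?_
  rw [rpow_sub hu, rpow_one]
  field_simp

lemma hasDerivAt_sq_mul_stationaryProfile (C γ m : ℝ) {f : ℝ → ℝ}
    (hf : ∀ u > (0:ℝ), f u = C * u ^ (-(2 * (1 + γ / 2))) * exp (-m * γ / u))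
    {v : ℝ} (hv : 0 < v) :
    HasDerivAt (fun u => u ^ 2 * f u) (γ * (m - v) * f v) v := by
  have hsq : ∀ u > (0:ℝ), u ^ 2 * f u = C * (u ^ (-γ) * exp (-(m * γ) / u)) := by
    intro u hu
    rw [hf u hu, show -(2 * (1 + γ / 2)) = -γ - 2 by ring, rpow_sub hu, rpow_two, neg_mul]
    field_simp
  have hnear : (fun u => C * (u ^ (-γ) * exp (-(m * γ) / u))) =ᶠ[𝓝 v] fun u => u ^ 2 * f u := by
    filter_upwards [Ioi_mem_nhds hv] with u hu using (hsq u hu).symm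
  refine (((hasDerivAt_rpow_mul_exp_neg_div (-γ) (m * γ) hv).const_mul C).congr_of_eventuallyEq
    hnear.symm).congr_deriv ?_
  have hfv : f v = C * (v ^ (-γ) * exp (-(m * γ) / v)) / v ^ 2 := by
    rw [← hsq v hv]
    field_simp
  rw [hfv]
  field_simp
  ring

theorem stmt_13_general (ω1 ω2 ζ α b12 Mbar ρbar C : ℝ)
    (hζ : 0 < ζ) (hα : 0 < α) (hρ : 0 < ρbar)
    (B D γ : ℝ)
    (hB : B = 2 * ω1 + ω2 * (1 + α)) (hD : D = ζ ^ 2 * (3 + α) / 2) (hγ : γ = B / D)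
    (f : ℝ → ℝ)
    (hf : ∀ v > (0:ℝ), f v = C * v ^ (-(2 * (1 + γ / 2))) * Real.exp (-(Mbar / ρbar) * γ / v)) :
    ∀ v > (0:ℝ),
      -(b12 / (1 + α)) * deriv (fun u =>
          ((ω1 * Mbar - ω2 * u * ρbar) + α * (ω2 * Mbar - ω2 * u * ρbar)
            + (ω1 * Mbar - ω1 * u * ρbar) + (ω2 * Mbar - ω1 * u * ρbar)) * f u) v
        + (ζ ^ 2 * b12 * ρbar / (2 * (1 + α)))
            * deriv (deriv (fun u => u ^ 2 * (3 + α) * f u)) v = 0 := by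
  intro v hv
  have hdiffusion : ∀ u > (0:ℝ), deriv (fun x => x ^ 2 * (3 + α) * f x) u
      = (3 + α) * (γ * (Mbar / ρbar - u) * f u) := by
    intro u hu
    have h := (hasDerivAt_sq_mul_stationaryProfile C γ (Mbar / ρbar) hf hu).const_mul (3 + α)
    rw [← h.deriv]
    congr 1
    funext x
    ring
  have hzeroFlux : (fun u =>
      ((ω1 * Mbar - ω2 * u * ρbar) + α * (ω2 * Mbar - ω2 * u * ρbar)
        + (ω1 * Mbar - ω1 * u * ρbar) + (ω2 * Mbar - ω1 * u * ρbar)) * f u)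
      =ᶠ[𝓝 v] fun u => ζ ^ 2 * ρbar / 2 * deriv (fun x => x ^ 2 * (3 + α) * f x) u := by
    filter_upwards [Ioi_mem_nhds hv] with u hu
    rw [hdiffusion u hu, hγ, hB, hD]
    field_simp
    ring
  have h1α : 1 + α ≠ 0 := by positivity
  rw [hzeroFlux.deriv_eq,
    deriv_const_mul_field (v := deriv fun x => x ^ 2 * (3 + α) * f x) (ζ ^ 2 * ρbar / 2)]
  generalize deriv (deriv fun x => x ^ 2 * (3 + α) * f x) v = X
  field_simp
  ring

/-- The profile `f̃₁⁽⁰⁾(v) = C v^{-2(1+γ/2)} exp(-(M̄/ρ̄)γ/v)` is a stationary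
solution of the Fokker–Planck equation (without the reaction term): the
right-hand side vanishes pointwise on `(0,∞)`. -/
theorem stmt_13 (ω1 ω2 ζ α b12 Mbar ρbar C : ℝ)
    (hω1 : ω1 ∈ Set.Icc (0:ℝ) 1) (hω2 : ω2 ∈ Set.Icc (0:ℝ) 1)
    (hζ : 0 < ζ) (hα : 0 < α) (hb : 0 < b12) (hM : 0 < Mbar) (hρ : 0 < ρbar) (hC : 0 < C)
    (B D γ : ℝ)
    (hB : B = 2 * ω1 + ω2 * (1 + α)) (hD : D = ζ ^ 2 * (3 + α) / 2) (hγ : γ = B / D)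
    (hγpos : 0 < γ)
    (f : ℝ → ℝ)
    (hf : ∀ v > (0:ℝ), f v = C * v ^ (-(2 * (1 + γ / 2))) * Real.exp (-(Mbar / ρbar) * γ / v)) :
    ∀ v > (0:ℝ),
      -(b12 / (1 + α)) * deriv (fun u =>
          ((ω1 * Mbar - ω2 * u * ρbar) + α * (ω2 * Mbar - ω2 * u * ρbar)
            + (ω1 * Mbar - ω1 * u * ρbar) + (ω2 * Mbar - ω1 * u * ρbar)) * f u) v
        + (ζ ^ 2 * b12 * ρbar / (2 * (1 + α)))
            * deriv (deriv (fun u => u ^ 2 * (3 + α) * f u)) v = 0 :=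
  stmt_13_general ω1 ω2 ζ α b12 Mbar ρbar C hζ hα hρ B D γ hB hD hγ f hf
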